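/- (Lower bound of Proposition 1.) Let c = (c₁,…,c_N) ∈ ℝ^N with cᵢ > 0 and ‖c‖ = 1, let c_ξ = min_i cᵢ, and let u, v ∈ ℝ^N. Set Δ = ‖u − v‖ and δ = ‖Φ_c(u) − Φ_c(v)‖. If 0 < Δ ≤ π·c_ξ, then (2/π)·Δ ≤ (sin(Δ/(2c_ξ))/(Δ/(2c_ξ)))·Δ = 2 c_ξ sin(Δ/(2c_ξ)) ≤ δ. -/

import Mathlib

open Real
open scoped RealInnerProductSpace

/-- The map `Φ_c : ℝ^N → ℝ^{2N}`,
`Φ_c(u) = (c₁cos(u₁/c₁), c₁sin(u₁/c₁), …, c_N cos(u_N/c_N), c_N sin(u_N/c_N))`,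
where `ℝ^{2N}` is modeled as `EuclideanSpace ℝ (Fin N × Fin 2)`. -/
noncomputable def PhiTorus {N : ℕ} (c u : EuclideanSpace ℝ (Fin N)) :
    EuclideanSpace ℝ (Fin N × Fin 2) :=
  (WithLp.equiv 2 _).symm fun p =>
    if p.2 = 0 then c p.1 * Real.cos (u p.1 / c p.1)
    else c p.1 * Real.sin (u p.1 / c p.1)

/-!
Each coordinate pair of `Φ_c` lies on a circle of radius `cᵢ`, so it moves by the chord
`2 cᵢ |sin ((uᵢ - vᵢ) / (2 cᵢ))|`. Since `sin x / x` decreases on `(0, π]` and every half-angle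
`|uᵢ - vᵢ| / (2 cᵢ)` is at most `t = Δ / (2 c_ξ)`, each chord is at least `(sin t / t) |uᵢ - vᵢ|`;
summing squares gives `δ ≥ (sin t / t) Δ = 2 c_ξ sin t`. The bound `2 / π` is Jordan's inequality.
-/

lemma sin_div_mul_le_sin {a t : ℝ} (ha : 0 ≤ a) (hat : a ≤ t) (ht : t ≤ π) :
    sin t / t * a ≤ sin a := by
  rcases ha.eq_or_lt with rfl | ha
  · simp
  have hslope := strictConcaveOn_sin_Icc.concaveOn.neg.secant_mono (a := 0)
    ⟨le_rfl, pi_pos.le⟩ ⟨ha.le, hat.trans ht⟩ ⟨ha.le.trans hat, ht⟩ ha.ne'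
    (ha.trans_le hat).ne' hat
  simp only [Pi.neg_apply, sin_zero, neg_zero, sub_zero, neg_div, neg_le_neg_iff] at hslope
  exact (le_div_iff₀ ha).1 hslope

lemma chord_sq (c x y : ℝ) :
    (c * cos (x / c) - c * cos (y / c)) ^ 2 + (c * sin (x / c) - c * sin (y / c)) ^ 2 =
      (2 * c * sin ((x - y) / (2 * c))) ^ 2 := by
  have hangle : x / c - y / c = 2 * ((x - y) / (2 * c)) := by ring
  have hcos := cos_sub (x / c) (y / c)
  rw [hangle, cos_two_mul] at hcos
  linear_combination c ^ 2 * sin_sq_add_cos_sq (x / c) + c ^ 2 * sin_sq_add_cos_sq (y / c)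
    + 2 * c ^ 2 * hcos - 4 * c ^ 2 * sin_sq_add_cos_sq ((x - y) / (2 * c))

lemma norm_PhiTorus_sub_sq {N : ℕ} (c u v : EuclideanSpace ℝ (Fin N)) :
    ‖PhiTorus c u - PhiTorus c v‖ ^ 2 = ∑ i, (2 * c i * sin ((u i - v i) / (2 * c i))) ^ 2 := by
  rw [EuclideanSpace.real_norm_sq_eq, Fintype.sum_prod_type]
  refine Finset.sum_congr rfl fun i _ => ?_
  simpa [PhiTorus, Fin.sum_univ_two] using chord_sq (c i) (u i) (v i)

lemma sin_div_mul_abs_le {r c t x : ℝ} (hr : 0 < r) (hrc : r ≤ c) (hx : |x| ≤ 2 * r * t)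
    (ht : t ≤ π) : sin t / t * |x| ≤ 2 * c * |sin (x / (2 * c))| := by
  have hc : 0 < c := hr.trans_le hrc
  have hangle : |x| / (2 * c) ≤ t :=
    (div_le_div_of_nonneg_left (abs_nonneg x) (by linarith) (by linarith)).trans
      ((div_le_iff₀' (by linarith)).2 hx)
  have habs : |x / (2 * c)| = |x| / (2 * c) := by rw [abs_div, abs_of_pos (by positivity : 0 < 2 * c)]
  rw [abs_sin_eq_sin_abs_of_abs_le_pi (by linarith), habs]
  calc sin t / t * |x| = 2 * c * (sin t / t * (|x| / (2 * c))) := by field_simp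
    _ ≤ 2 * c * sin (|x| / (2 * c)) :=
      mul_le_mul_of_nonneg_left (sin_div_mul_le_sin (by positivity) hangle ht) (by positivity)

theorem two_mul_sin_le_norm_PhiTorus_sub {N : ℕ} {c u v : EuclideanSpace ℝ (Fin N)} {r : ℝ}
    (hr : 0 < r) (hrc : ∀ i, r ≤ c i) (huv : ‖u - v‖ ≤ 2 * π * r) :
    2 * r * sin (‖u - v‖ / (2 * r)) ≤ ‖PhiTorus c u - PhiTorus c v‖ := by
  set t := ‖u - v‖ / (2 * r)
  have hnorm : ‖u - v‖ = 2 * r * t := (mul_div_cancel₀ _ (by positivity)).symm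
  have ht0 : 0 ≤ t := by positivity
  have htπ : t ≤ π := by rw [div_le_iff₀ (by linarith)]; linarith
  have hscale : 0 ≤ sin t / t := div_nonneg (sin_nonneg_of_nonneg_of_le_pi ht0 htπ) ht0
  refine le_of_pow_le_pow_left₀ two_ne_zero (norm_nonneg _) ?_
  calc (2 * r * sin t) ^ 2 = ∑ i, (sin t / t * |u i - v i|) ^ 2 := by
        simp_rw [mul_pow, sq_abs, ← Finset.mul_sum, ← PiLp.sub_apply,
          ← EuclideanSpace.real_norm_sq_eq, hnorm]
        rcases eq_or_ne t 0 with h | h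
        · simp [h]
        · field_simp
    _ ≤ ∑ i, (2 * c i * sin ((u i - v i) / (2 * c i))) ^ 2 := by
        refine Finset.sum_le_sum fun i _ => ?_
        rw [← sq_abs (2 * c i * _), abs_mul, abs_of_pos (by linarith [hrc i] : 0 < 2 * c i)]
        refine pow_le_pow_left₀ (mul_nonneg hscale (abs_nonneg _)) (sin_div_mul_abs_le hr (hrc i) ?_ htπ) 2
        simpa [← hnorm] using PiLp.norm_apply_le (u - v) i
    _ = ‖PhiTorus c u - PhiTorus c v‖ ^ 2 := (norm_PhiTorus_sub_sq c u v).symm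

theorem stmt_4_general (N : ℕ) (c : EuclideanSpace ℝ (Fin N))
    (cξ : ℝ) (hξ : IsLeast (Set.range fun i => c i) cξ)
    (u v : EuclideanSpace ℝ (Fin N)) (Δ δ : ℝ)
    (hΔ : Δ = ‖u - v‖) (hδ : δ = ‖PhiTorus c u - PhiTorus c v‖)
    (h0 : 0 < Δ) (hπ : Δ ≤ π * cξ) :
    2 / π * Δ ≤ 2 * cξ * Real.sin (Δ / (2 * cξ)) ∧
      Real.sin (Δ / (2 * cξ)) / (Δ / (2 * cξ)) * Δ = 2 * cξ * Real.sin (Δ / (2 * cξ)) ∧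
      2 * cξ * Real.sin (Δ / (2 * cξ)) ≤ δ := by
  have hξpos : 0 < cξ := pos_of_mul_pos_right (h0.trans_le hπ) pi_pos.le
  have hΔt : Δ = 2 * cξ * (Δ / (2 * cξ)) := by field_simp
  refine ⟨?_, ?_, ?_⟩
  · calc 2 / π * Δ = 2 * cξ * (2 / π * (Δ / (2 * cξ))) := by field_simp
      _ ≤ 2 * cξ * sin (Δ / (2 * cξ)) := by
        refine mul_le_mul_of_nonneg_left (mul_le_sin (by positivity) ?_) (by positivity)
        rw [div_le_iff₀ (by positivity)]
        linarith
  · rw [hΔt]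
    field_simp
  · subst hΔ hδ
    exact two_mul_sin_le_norm_PhiTorus_sub hξpos (fun i => hξ.2 ⟨i, rfl⟩) (by nlinarith [pi_pos])

/-- Lower bound of Proposition 1, where cξ = min_i c_i. -/
theorem stmt_4 (N : ℕ) (c : EuclideanSpace ℝ (Fin N)) (hc : ∀ i, 0 < c i)
    (hnorm : ‖c‖ = 1) (cξ : ℝ) (hξ : IsLeast (Set.range fun i => c i) cξ)
    (u v : EuclideanSpace ℝ (Fin N)) (Δ δ : ℝ)
    (hΔ : Δ = ‖u - v‖) (hδ : δ = ‖PhiTorus c u - PhiTorus c v‖)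
    (h0 : 0 < Δ) (hπ : Δ ≤ π * cξ) :
    2 / π * Δ ≤ 2 * cξ * Real.sin (Δ / (2 * cξ)) ∧
      Real.sin (Δ / (2 * cξ)) / (Δ / (2 * cξ)) * Δ = 2 * cξ * Real.sin (Δ / (2 * cξ)) ∧
      2 * cξ * Real.sin (Δ / (2 * cξ)) ≤ δ :=
  stmt_4_general N c cξ hξ u v Δ δ hΔ hδ h0 hπ
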